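/- arXiv:1810.12951 — 2 statements merged into one kernel-verified Lean document; each statement's English description precedes it below -/
import Mathlib

section
/- Let β ∈ (0,1) and let f be continuous on [0, ∞) with |f(t)| ≤ M e^{ct} for some constants M, c and all t ≥ 0. Assume that J^{1−β} f is differentiable on (0, ∞), so that ∂^β f(t) = (d/dt) J^{1−β} f(t) exists for t > 0, and that ∂^β f is locally integrable and of exponential order. Then for every sufficiently large real λ, L[∂^β f](λ) = λ^{β} L[f](λ) − λ^{β−1} f(0). -/
/-!
Put `φ = f - f 0`. Then `J^{1-β} f` is `Γ(1-β)⁻¹` times the convolution of `φ` with `t^{-β}`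
on `[0, t]`, so by Fubini its Laplace transform is
`λ^{β-1} L[φ](λ) = λ^{β-1} (L[f](λ) - f(0)/λ)`: after the substitution `t = s + u` the inner
integral is the Gamma integral `∫₀^∞ u^{-β} e^{-λu} du = Γ(1-β) λ^{β-1}`.
The convolution tends to `0` at `0⁺` because `t^{-β}` is integrable and `φ` is bounded near `0`,
so the rule `L[g'](λ) = λ L[g](λ) - g(0)` applies to `g = J^{1-β} f`. For that rule no growth
bound on `g` is needed: if `g e^{-λt}` and its derivative are both integrable on `(0, ∞)`, then
`g(t) e^{-λt} → 0`.
-/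

/-- The modified fractional integral
`J^p f(t) = (1/Γ(p)) ∫₀ᵗ (t−s)^{p−1} (f(s) − f(0)) ds`. -/
noncomputable def modInt (p : ℝ) (f : ℝ → ℝ) (t : ℝ) : ℝ :=
  (1 / Real.Gamma p) * ∫ s in (0:ℝ)..t, (t - s) ^ (p - 1) * (f s - f 0)

/-- The Laplace transform `L[f](λ) = ∫₀^∞ f(t) e^{−λt} dt`. -/
noncomputable def laplace (f : ℝ → ℝ) (l : ℝ) : ℝ :=
  ∫ t in Set.Ioi (0:ℝ), f t * Real.exp (-l * t)

open MeasureTheory Real Set Filter Topology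

section Laplace

variable {f g g' : ℝ → ℝ} {l : ℝ}

lemma integrableOn_mul_exp_of_abs_le {A a : ℝ}
    (hm : AEStronglyMeasurable f (volume.restrict (Ioi 0)))
    (hb : ∀ t > 0, |f t| ≤ A * exp (a * t)) (hl : a < l) :
    IntegrableOn (fun t => f t * exp (-l * t)) (Ioi 0) := by
  refine Integrable.mono' ((exp_neg_integrableOn_Ioi 0 (sub_pos.2 hl)).const_mul A)
    (hm.mul (by fun_prop : Continuous fun t => exp (-l * t)).aestronglyMeasurable) ?_
  refine (ae_restrict_iff' measurableSet_Ioi).2 (Eventually.of_forall fun t ht => ?_)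
  calc ‖f t * exp (-l * t)‖ = |f t| * exp (-l * t) := by
        rw [norm_mul, norm_eq_abs, norm_of_nonneg (exp_pos _).le]
    _ ≤ A * exp (a * t) * exp (-l * t) := by gcongr; exact hb t ht
    _ = A * exp (-(l - a) * t) := by rw [mul_assoc, ← exp_add]; congr 2; ring

lemma integrableOn_sub_mul_exp (a : ℝ) (hl : 0 < l)
    (hf : IntegrableOn (fun t => f t * exp (-l * t)) (Ioi 0)) :
    IntegrableOn (fun t => (f t - a) * exp (-l * t)) (Ioi 0) := by
  simp only [sub_mul]
  exact hf.sub ((exp_neg_integrableOn_Ioi 0 hl).const_mul a)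

lemma laplace_sub_const (a : ℝ) (hl : 0 < l)
    (hf : IntegrableOn (fun t => f t * exp (-l * t)) (Ioi 0)) :
    laplace (fun t => f t - a) l = laplace f l - a / l := by
  simp only [laplace, sub_mul]
  rw [integral_sub hf ((exp_neg_integrableOn_Ioi 0 hl).const_mul a), integral_const_mul,
    integral_exp_mul_Ioi (neg_neg_of_pos hl), mul_zero, exp_zero, neg_div_neg_eq, mul_one_div]

lemma laplace_const_mul (a : ℝ) :
    laplace (fun t => a * g t) l = a * laplace g l := by
  simp only [laplace, mul_assoc, integral_const_mul]

lemma laplace_deriv (hg0 : ContinuousWithinAt g (Ici 0) 0)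
    (hderiv : ∀ t > 0, HasDerivAt g (g' t) t)
    (hg : IntegrableOn (fun t => g t * exp (-l * t)) (Ioi 0))
    (hg' : IntegrableOn (fun t => g' t * exp (-l * t)) (Ioi 0)) :
    laplace g' l = l * laplace g l - g 0 := by
  have hprod : ∀ t ∈ Ioi (0:ℝ), HasDerivAt (fun t => g t * exp (-l * t))
      (g' t * exp (-l * t) - l * (g t * exp (-l * t))) t := fun t ht => by
    refine ((hderiv t ht).mul ((hasDerivAt_id' t).const_mul (-l)).exp).congr_deriv ?_
    ring
  have hint := hg'.sub (hg.const_mul l)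
  have hftc := integral_Ioi_of_hasDerivAt_of_tendsto
    (hg0.mul (by fun_prop : Continuous fun t => exp (-l * t)).continuousWithinAt) hprod hint
    (tendsto_zero_of_hasDerivAt_of_integrableOn_Ioi hprod hint hg)
  rw [integral_sub hg' (hg.const_mul l), integral_const_mul] at hftc
  simp only [Pi.mul_apply, mul_zero, exp_zero, mul_one, zero_sub] at hftc
  rw [laplace, laplace]
  linarith

end Laplace

-- `Γ(p)` times the Riemann–Liouville integral of order `p`.
noncomputable def rlInt (p : ℝ) (φ : ℝ → ℝ) (t : ℝ) : ℝ :=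
  ∫ s in (0:ℝ)..t, (t - s) ^ (p - 1) * φ s

section RiemannLiouville

variable {p : ℝ} {φ : ℝ → ℝ}

lemma integral_sub_rpow (hp : 0 < p) (t : ℝ) :
    ∫ s in (0:ℝ)..t, (t - s) ^ (p - 1) = t ^ p / p := by
  rw [intervalIntegral.integral_comp_sub_left (fun x => x ^ (p - 1)), sub_self, sub_zero,
    integral_rpow (Or.inl (by linarith)), sub_add_cancel, zero_rpow hp.ne', sub_zero]

lemma intervalIntegrable_sub_rpow (hp : 0 < p) (t : ℝ) :
    IntervalIntegrable (fun s => (t - s) ^ (p - 1)) volume 0 t := by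
  simpa using ((intervalIntegral.intervalIntegrable_rpow' (r := p - 1) (a := 0) (b := t)
    (by linarith)).comp_sub_left t).symm

lemma norm_rlInt_le {K t : ℝ} (hp : 0 < p) (ht : 0 ≤ t)
    (hφ : ∀ s ∈ Ioc 0 t, ‖φ s‖ ≤ K) : ‖rlInt p φ t‖ ≤ K * t ^ p / p := by
  calc ‖rlInt p φ t‖ ≤ ∫ s in (0:ℝ)..t, (t - s) ^ (p - 1) * K := by
        refine intervalIntegral.norm_integral_le_of_norm_le ht
          (Eventually.of_forall fun s hs => ?_) ((intervalIntegrable_sub_rpow hp t).mul_const K)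
        rw [norm_mul, norm_of_nonneg (rpow_nonneg (sub_nonneg.2 hs.2) _)]
        exact mul_le_mul_of_nonneg_left (hφ s hs) (rpow_nonneg (sub_nonneg.2 hs.2) _)
    _ = K * t ^ p / p := by rw [intervalIntegral.integral_mul_const, integral_sub_rpow hp]; ring

lemma continuousWithinAt_rlInt_zero (hp : 0 < p)
    (hφ : ContinuousOn φ (Ici 0)) : ContinuousWithinAt (rlInt p φ) (Ici 0) 0 := by
  obtain ⟨K, hK⟩ := isCompact_Icc.exists_bound_of_continuousOn (hφ.mono Icc_subset_Ici_self)
  have hbound : Tendsto (fun t => K * t ^ p / p) (𝓝[Ici 0] 0) (𝓝 0) := by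
    have := (((continuous_rpow_const hp.le).tendsto 0).const_mul K).div_const p
    simpa [zero_rpow hp.ne'] using tendsto_nhdsWithin_of_tendsto_nhds this
  rw [ContinuousWithinAt, show rlInt p φ 0 = 0 by simp [rlInt]]
  refine squeeze_zero_norm' ?_ hbound
  filter_upwards [inter_mem_nhdsWithin (Ici 0) (Iio_mem_nhds one_pos)] with t ⟨ht0, ht1⟩
  exact norm_rlInt_le hp ht0 fun s hs => hK s ⟨hs.1.le, hs.2.trans ht1.le⟩

end RiemannLiouville

noncomputable def gammaKernel (p l : ℝ) : ℝ → ℝ :=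
  (Ioi 0).indicator fun u => u ^ (p - 1) * exp (-l * u)

section GammaKernel

variable {p l : ℝ} {φ : ℝ → ℝ}

lemma gammaKernel_nonneg (u : ℝ) : 0 ≤ gammaKernel p l u :=
  indicator_nonneg (fun _ hu => mul_nonneg (rpow_nonneg (le_of_lt hu) _) (exp_pos _).le) u

lemma measurable_gammaKernel : Measurable (gammaKernel p l) :=
  Measurable.indicator (by fun_prop) measurableSet_Ioi

lemma integrable_gammaKernel (hp : 0 < p) (hl : 0 < l) : Integrable (gammaKernel p l) := by
  rw [gammaKernel, integrable_indicator_iff measurableSet_Ioi]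
  simpa using integrableOn_rpow_mul_exp_neg_mul_rpow (s := p - 1) (p := 1) (by linarith) one_pos hl

lemma integral_gammaKernel (hp : 0 < p) (hl : 0 < l) :
    ∫ u, gammaKernel p l u = Gamma p * l ^ (-p) := by
  rw [gammaKernel, integral_indicator measurableSet_Ioi]
  simp_rw [neg_mul]
  rw [integral_rpow_mul_exp_neg_mul_Ioi hp hl, one_div, inv_rpow hl.le, rpow_neg hl.le, mul_comm]

lemma setIntegral_gammaKernel_sub (hp : 0 < p) (hl : 0 < l) {s : ℝ} (hs : 0 ≤ s) :
    ∫ t in Ioi 0, gammaKernel p l (t - s) = Gamma p * l ^ (-p) := by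
  rw [setIntegral_eq_integral_of_forall_compl_eq_zero, integral_sub_right_eq_self,
    integral_gammaKernel hp hl]
  exact fun t ht => indicator_of_notMem (fun h => ht (mem_Ioi.2 (hs.trans_lt (sub_pos.1 h)))) _

lemma gammaKernel_sub_mul (t s : ℝ) :
    gammaKernel p l (t - s) * (φ s * exp (-l * s))
      = (Iio t).indicator (fun s => (t - s) ^ (p - 1) * φ s * exp (-l * t)) s := by
  by_cases h : s < t
  · rw [gammaKernel, indicator_of_mem (mem_Ioi.2 (sub_pos.2 h)), indicator_of_mem (mem_Iio.2 h),
      show -l * t = -l * (t - s) + -l * s by ring, exp_add]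
    ring
  · simp [gammaKernel, h]

lemma setIntegral_gammaKernel_sub_mul {t : ℝ} (ht : 0 < t) :
    ∫ s in Ioi 0, gammaKernel p l (t - s) * (φ s * exp (-l * s))
      = rlInt p φ t * exp (-l * t) := by
  simp_rw [gammaKernel_sub_mul]
  rw [setIntegral_indicator measurableSet_Iio, Ioi_inter_Iio, rlInt,
    intervalIntegral.integral_of_le ht.le, ← integral_Ioc_eq_integral_Ioo, ← integral_mul_const]

lemma integrable_gammaKernel_sub_mul (hp : 0 < p) (hl : 0 < l)
    (hφ : IntegrableOn (fun s => φ s * exp (-l * s)) (Ioi 0)) :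
    Integrable (fun x : ℝ × ℝ => gammaKernel p l (x.1 - x.2) * (φ x.2 * exp (-l * x.2)))
      ((volume.restrict (Ioi 0)).prod (volume.restrict (Ioi 0))) := by
  refine (integrable_prod_iff' ?_).2 ⟨Eventually.of_forall fun s =>
    (((integrable_gammaKernel hp hl).comp_sub_right s).mul_const (φ s * exp (-l * s))).restrict,
    ?_⟩
  · exact (measurable_gammaKernel.comp (measurable_fst.sub measurable_snd)).aestronglyMeasurable.mul
      (hφ.aestronglyMeasurable.comp_quasiMeasurePreserving Measure.quasiMeasurePreserving_snd)
  have hnorm : ∀ s ∈ Ioi (0:ℝ), ∫ t in Ioi 0, ‖gammaKernel p l (t - s) * (φ s * exp (-l * s))‖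
      = Gamma p * l ^ (-p) * ‖φ s * exp (-l * s)‖ := fun s hs => by
    simp_rw [norm_mul, norm_of_nonneg (gammaKernel_nonneg _)]
    rw [integral_mul_const, setIntegral_gammaKernel_sub hp hl hs.le]
  exact IntegrableOn.congr_fun (hφ.norm.const_mul _) (fun s hs => (hnorm s hs).symm)
    measurableSet_Ioi

lemma integrableOn_rlInt_mul_exp (hp : 0 < p) (hl : 0 < l)
    (hφ : IntegrableOn (fun s => φ s * exp (-l * s)) (Ioi 0)) :
    IntegrableOn (fun t => rlInt p φ t * exp (-l * t)) (Ioi 0) :=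
  IntegrableOn.congr_fun (integrable_gammaKernel_sub_mul hp hl hφ).integral_prod_left
    (fun _ ht => setIntegral_gammaKernel_sub_mul ht) measurableSet_Ioi

lemma laplace_rlInt (hp : 0 < p) (hl : 0 < l)
    (hφ : IntegrableOn (fun s => φ s * exp (-l * s)) (Ioi 0)) :
    laplace (rlInt p φ) l = Gamma p * l ^ (-p) * laplace φ l := by
  have hswap := integral_integral_swap
    (f := fun t s => gammaKernel p l (t - s) * (φ s * exp (-l * s)))
    (integrable_gammaKernel_sub_mul hp hl hφ)
  have hinner : ∀ s ∈ Ioi (0:ℝ), ∫ t in Ioi 0, gammaKernel p l (t - s) * (φ s * exp (-l * s))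
      = Gamma p * l ^ (-p) * (φ s * exp (-l * s)) := fun s hs => by
    rw [integral_mul_const, setIntegral_gammaKernel_sub hp hl hs.le]
  rw [laplace, laplace, ← integral_const_mul, ← setIntegral_congr_fun measurableSet_Ioi hinner,
    ← hswap, setIntegral_congr_fun measurableSet_Ioi fun _ ht => setIntegral_gammaKernel_sub_mul ht]

end GammaKernel

section ModInt

variable {f : ℝ → ℝ} {p l : ℝ}

lemma modInt_eq_rlInt :
    modInt p f = fun t => 1 / Gamma p * rlInt p (fun s => f s - f 0) t :=
  rfl

lemma modInt_zero : modInt p f 0 = 0 := by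
  simp [modInt]

lemma continuousWithinAt_modInt_zero (hp : 0 < p) (hf : ContinuousOn f (Ici 0)) :
    ContinuousWithinAt (modInt p f) (Ici 0) 0 := by
  rw [modInt_eq_rlInt]
  exact (continuousWithinAt_rlInt_zero hp (hf.sub continuousOn_const)).const_mul _

lemma integrableOn_modInt_mul_exp (hp : 0 < p) (hl : 0 < l)
    (hf : IntegrableOn (fun t => f t * exp (-l * t)) (Ioi 0)) :
    IntegrableOn (fun t => modInt p f t * exp (-l * t)) (Ioi 0) := by
  simp only [modInt_eq_rlInt, mul_assoc]
  exact (integrableOn_rlInt_mul_exp hp hl (integrableOn_sub_mul_exp (f 0) hl hf)).const_mul _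

lemma laplace_modInt (hp : 0 < p) (hl : 0 < l)
    (hf : IntegrableOn (fun t => f t * exp (-l * t)) (Ioi 0)) :
    laplace (modInt p f) l = l ^ (-p) * (laplace f l - f 0 / l) := by
  rw [modInt_eq_rlInt, laplace_const_mul,
    laplace_rlInt hp hl (integrableOn_sub_mul_exp (f 0) hl hf), laplace_sub_const (f 0) hl hf]
  field_simp [(Gamma_pos_of_pos hp).ne']

end ModInt

theorem laplace_caputo_deriv_general (β : ℝ) (hβ1 : β < 1)
    (f Df : ℝ → ℝ) (hf : ContinuousOn f (Set.Ici 0))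
    (M c : ℝ) (hbd : ∀ t ≥ (0:ℝ), |f t| ≤ M * Real.exp (c * t))
    (hD : ∀ t > (0:ℝ), HasDerivAt (fun s => modInt (1 - β) f s) (Df t) t)
    (hloc : MeasureTheory.LocallyIntegrableOn Df (Set.Ioi 0))
    (M' c' : ℝ) (hDbd : ∀ t > (0:ℝ), |Df t| ≤ M' * Real.exp (c' * t)) :
    ∃ l₀ : ℝ, ∀ l > l₀, laplace Df l = l ^ β * laplace f l - l ^ (β - 1) * f 0 := by
  have hp : 0 < 1 - β := sub_pos.2 hβ1
  refine ⟨max (max c c') 0, fun l hl => ?_⟩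
  obtain ⟨hcc', hl0⟩ := max_lt_iff.1 hl
  obtain ⟨hlc, hlc'⟩ := max_lt_iff.1 hcc'
  have hfl := integrableOn_mul_exp_of_abs_le
    ((hf.mono Ioi_subset_Ici_self).aestronglyMeasurable measurableSet_Ioi)
    (fun t ht => hbd t ht.le) hlc
  have hDl := integrableOn_mul_exp_of_abs_le hloc.aestronglyMeasurable hDbd hlc'
  rw [laplace_deriv (continuousWithinAt_modInt_zero hp hf) hD
      (integrableOn_modInt_mul_exp hp hl0 hfl) hDl,
    laplace_modInt hp hl0 hfl, modInt_zero, sub_zero, neg_sub, rpow_sub_one hl0.ne']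
  field_simp

/-- For `β ∈ (0,1)` and `f` continuous on `[0,∞)` of exponential order, if the
Caputo-type derivative `∂^β f(t) = (d/dt) J^{1−β} f(t)` exists for `t > 0` and is
locally integrable and of exponential order, then for all sufficiently large
real `λ`, `L[∂^β f](λ) = λ^β L[f](λ) − λ^{β−1} f(0)`. -/
theorem laplace_caputo_deriv (β : ℝ) (hβ0 : 0 < β) (hβ1 : β < 1)
    (f Df : ℝ → ℝ) (hf : ContinuousOn f (Set.Ici 0))
    (M c : ℝ) (hbd : ∀ t ≥ (0:ℝ), |f t| ≤ M * Real.exp (c * t))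
    (hD : ∀ t > (0:ℝ), HasDerivAt (fun s => modInt (1 - β) f s) (Df t) t)
    (hloc : MeasureTheory.LocallyIntegrableOn Df (Set.Ioi 0))
    (M' c' : ℝ) (hDbd : ∀ t > (0:ℝ), |Df t| ≤ M' * Real.exp (c' * t)) :
    ∃ l₀ : ℝ, ∀ l > l₀, laplace Df l = l ^ β * laplace f l - l ^ (β - 1) * f 0 :=
  laplace_caputo_deriv_general β hβ1 f Df hf M c hbd hD hloc M' c' hDbd
end

section
/- (Fractional Gronwall–Bellman inequality.) Let β > 0, B > 0, let y be a nonnegative continuous function on [0, T], and let A be a nonnegative nondecreasing function on [0, T]. If y(t) ≤ A(t) + B ∫₀ᵗ (t−s)^{β−1} y(s) ds for all t ∈ [0, T], then y(t) ≤ A(t) · E_β(B Γ(β) t^β) for all t ∈ [0, T]. -/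
/-!
Picard iteration. Put `C = B Γ(β)` and `a_k(t) = C^k t^{βk} / Γ(βk + 1)`, the `k`-th term of the
series of `E_β(C t^β)`. Euler's Beta integral gives `B ∫₀ᵗ (t - s)^{β-1} a_k(s) ds = a_{k+1}(t)`,
so substituting the inequality into itself `n` times, starting from a bound `y ≤ M` and using that
`A` is nondecreasing, yields `y(t) ≤ A(t) ∑_{k<n} a_k(t) + M a_n(t)`. The series converges by the
ratio test, because log-convexity of `Γ` forces `Γ(x + β) / Γ(x) → ∞`; hence `a_n(t) → 0` and the
bound tends to `A(t) E_β(C t^β)`.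
-/

open MeasureTheory Set Filter Topology Real

/-- The two-parameter Mittag-Leffler function
`E_{β,ρ}(z) = ∑_{k=0}^∞ z^k / Γ(βk + ρ)`. The one-parameter Mittag-Leffler
function is `E_β = E_{β,1}`. -/
noncomputable def mittagLeffler (β ρ z : ℝ) : ℝ :=
  ∑' k : ℕ, z ^ k / Real.Gamma (β * k + ρ)

theorem integral_rpow_mul_sub_rpow {a b t : ℝ} (ha : 0 < a) (hb : 0 < b) (ht : 0 < t) :
    ∫ s in (0:ℝ)..t, s ^ (a - 1) * (t - s) ^ (b - 1) =
      Gamma a * Gamma b / Gamma (a + b) * t ^ (a + b - 1) := by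
  apply Complex.ofReal_injective
  have hcast : ∀ s ∈ uIcc 0 t, ((s ^ (a - 1) * (t - s) ^ (b - 1) : ℝ) : ℂ) =
      (s : ℂ) ^ ((a : ℂ) - 1) * ((t : ℂ) - s) ^ ((b : ℂ) - 1) := by
    intro s hs
    rw [uIcc_of_le ht.le] at hs
    push_cast [Complex.ofReal_cpow hs.1, Complex.ofReal_cpow (sub_nonneg.2 hs.2)]
    rfl
  rw [← intervalIntegral.integral_ofReal, intervalIntegral.integral_congr hcast,
    Complex.betaIntegral_scaled _ _ ht,
    Complex.betaIntegral_eq_Gamma_mul_div _ _ (by simpa) (by simpa)]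
  push_cast [Complex.ofReal_cpow ht.le, ← Complex.ofReal_add, Complex.Gamma_ofReal]
  ring

theorem Gamma_add_one_le_Gamma_add_mul_rpow {β x : ℝ} (hβ₀ : 0 < β) (hβ₁ : β < 1)
    (hx : 0 < x) : Gamma (x + 1) ≤ Gamma (x + β) * (x + β) ^ (1 - β) := by
  have hxβ : 0 < x + β := by linarith
  have hΓ := Gamma_pos_of_pos hxβ
  calc Gamma (x + 1) = Gamma (β * (x + β) + (1 - β) * (x + β + 1)) := by ring_nf
    _ ≤ Gamma (x + β) ^ β * Gamma (x + β + 1) ^ (1 - β) :=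
      Gamma_mul_add_mul_le_rpow_Gamma_mul_rpow_Gamma hxβ (by linarith) hβ₀ (sub_pos.2 hβ₁)
        (by ring)
    _ = Gamma (x + β) * (x + β) ^ (1 - β) := by
      rw [Gamma_add_one hxβ.ne', mul_rpow hxβ.le hΓ.le, mul_left_comm, ← rpow_add hΓ,
        add_sub_cancel, rpow_one, mul_comm]

theorem tendsto_Gamma_add_div_Gamma_atTop {β : ℝ} (hβ : 0 < β) :
    Tendsto (fun x => Gamma (x + β) / Gamma x) atTop atTop := by
  -- Reduce to an exponent `γ < 1`, using that `Γ` is increasing on `[2, ∞)`.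
  set γ := min β (1 / 2)
  have hγ₀ : 0 < γ := lt_min hβ one_half_pos
  have hγ₁ : γ < 1 := (min_le_right _ _).trans_lt one_half_lt_one
  refine tendsto_atTop_mono' _ ?_
    (((tendsto_rpow_atTop hγ₀).comp (tendsto_atTop_add_const_right _ γ tendsto_id)).atTop_div_const
      two_pos)
  filter_upwards [eventually_ge_atTop 2] with x hx
  have hx₀ : 0 < x := by linarith
  have hxγ : 0 < x + γ := by linarith
  have hΓ := Gamma_pos_of_pos hx₀
  have hlogconvex := Gamma_add_one_le_Gamma_add_mul_rpow hγ₀ hγ₁ hx₀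
  rw [Gamma_add_one hx₀.ne'] at hlogconvex
  have hmono : Gamma (x + γ) ≤ Gamma (x + β) :=
    Gamma_strictMonoOn_Ici.monotoneOn (by simp; linarith) (by simp; linarith) (by simp [γ])
  have hsplit : (x + γ) ^ γ * (x + γ) ^ (1 - γ) = x + γ := by
    rw [← rpow_add hxγ, add_sub_cancel, rpow_one]
  have hpow : 0 < (x + γ) ^ (1 - γ) := rpow_pos_of_pos hxγ _
  rw [Function.comp_apply, id, le_div_iff₀ hΓ]
  nlinarith

theorem summable_mittagLeffler {β ρ : ℝ} (hβ : 0 < β) (hρ : 0 < ρ) (z : ℝ) :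
    Summable fun k : ℕ => z ^ k / Gamma (β * k + ρ) := by
  have hw : Tendsto (fun k : ℕ => β * k + ρ) atTop atTop :=
    tendsto_atTop_add_const_right _ ρ (tendsto_natCast_atTop_atTop.const_mul_atTop hβ)
  refine summable_of_ratio_norm_eventually_le one_half_lt_one ?_
  filter_upwards [((tendsto_Gamma_add_div_Gamma_atTop hβ).comp hw).eventually_ge_atTop (2 * |z|)]
    with k hk
  have hΓ : 0 < Gamma (β * k + ρ) := Gamma_pos_of_pos (by positivity)
  have hΓ' : 0 < Gamma (β * k + ρ + β) := Gamma_pos_of_pos (by positivity)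
  rw [Function.comp_apply, le_div_iff₀ hΓ] at hk
  rw [Nat.cast_succ, show β * (k + 1) + ρ = β * k + ρ + β by ring, norm_div, norm_div, norm_pow,
    norm_pow, norm_of_nonneg hΓ.le, norm_of_nonneg hΓ'.le, Real.norm_eq_abs, pow_succ,
    div_le_iff₀ hΓ', mul_div_assoc', div_mul_eq_mul_div, le_div_iff₀ hΓ]
  have := pow_nonneg (abs_nonneg z) k
  nlinarith

section KernelIntegral

variable {β u : ℝ} {f g : ℝ → ℝ}

theorem intervalIntegrable_sub_rpow_mul (hβ : 0 < β) (hu : 0 ≤ u)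
    (hf : ContinuousOn f (Icc 0 u)) :
    IntervalIntegrable (fun s => (u - s) ^ (β - 1) * f s) volume 0 u := by
  have hkernel : IntervalIntegrable (fun s => (u - s) ^ (β - 1)) volume 0 u := by
    simpa using ((intervalIntegral.intervalIntegrable_rpow' (a := 0) (b := u)
      (by linarith : (-1:ℝ) < β - 1)).comp_sub_left u).symm
  exact hkernel.mul_continuousOn (by rwa [uIcc_of_le hu])

theorem integral_sub_rpow_mul_mono (hβ : 0 < β) (hu : 0 ≤ u)
    (hf : ContinuousOn f (Icc 0 u)) (hg : ContinuousOn g (Icc 0 u))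
    (hfg : ∀ s ∈ Icc 0 u, f s ≤ g s) :
    ∫ s in (0:ℝ)..u, (u - s) ^ (β - 1) * f s ≤ ∫ s in (0:ℝ)..u, (u - s) ^ (β - 1) * g s :=
  intervalIntegral.integral_mono_on hu (intervalIntegrable_sub_rpow_mul hβ hu hf)
    (intervalIntegrable_sub_rpow_mul hβ hu hg) fun s hs =>
      mul_le_mul_of_nonneg_left (hfg s hs) (rpow_nonneg (sub_nonneg.2 hs.2) _)

end KernelIntegral

noncomputable def mittagLefflerTerm (β C : ℝ) (k : ℕ) (u : ℝ) : ℝ :=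
  C ^ k * u ^ (β * k) / Gamma (β * k + 1)

section MittagLefflerTerm

variable {β C u : ℝ}

@[simp]
theorem mittagLefflerTerm_zero : mittagLefflerTerm β C 0 u = 1 := by
  simp [mittagLefflerTerm]

theorem mittagLefflerTerm_nonneg (hβ : 0 ≤ β) (hC : 0 ≤ C) (hu : 0 ≤ u) (k : ℕ) :
    0 ≤ mittagLefflerTerm β C k u := by
  have := Gamma_pos_of_pos (by positivity : 0 < β * k + 1)
  unfold mittagLefflerTerm
  positivity

theorem continuous_mittagLefflerTerm (hβ : 0 ≤ β) (k : ℕ) :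
    Continuous (mittagLefflerTerm β C k) :=
  ((continuous_rpow_const (by positivity)).const_mul _).div_const _

theorem hasSum_mittagLefflerTerm (hβ : 0 < β) (hu : 0 ≤ u) :
    HasSum (fun k => mittagLefflerTerm β C k u) (mittagLeffler β 1 (C * u ^ β)) := by
  have hterm : ∀ k : ℕ, (C * u ^ β) ^ k / Gamma (β * k + 1) = mittagLefflerTerm β C k u := by
    intro k
    rw [mittagLefflerTerm, mul_pow, ← rpow_natCast (u ^ β), ← rpow_mul hu]
  simpa only [mittagLeffler, hterm] using (summable_mittagLeffler hβ one_pos (C * u ^ β)).hasSum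

theorem integral_sub_rpow_mul_mittagLefflerTerm (hβ : 0 < β) (B : ℝ) (hu : 0 ≤ u) (k : ℕ) :
    B * ∫ s in (0:ℝ)..u, (u - s) ^ (β - 1) * mittagLefflerTerm β (B * Gamma β) k s =
      mittagLefflerTerm β (B * Gamma β) (k + 1) u := by
  rcases hu.eq_or_lt with rfl | hu
  · simp [mittagLefflerTerm, zero_rpow (by positivity : β * ((k : ℝ) + 1) ≠ 0)]
  have hintegrand : (fun s => (u - s) ^ (β - 1) * mittagLefflerTerm β (B * Gamma β) k s) =
      fun s => (B * Gamma β) ^ k / Gamma (β * k + 1) *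
        (s ^ ((β * k + 1) - 1) * (u - s) ^ (β - 1)) := by
    ext s
    rw [mittagLefflerTerm, add_sub_cancel_right]
    ring
  rw [hintegrand, intervalIntegral.integral_const_mul,
    integral_rpow_mul_sub_rpow (by positivity) hβ hu, mittagLefflerTerm,
    show β * k + 1 + β = β * ((k + 1 : ℕ) : ℝ) + 1 by push_cast; ring,
    show β * ((k + 1 : ℕ) : ℝ) + 1 - 1 = β * ((k + 1 : ℕ) : ℝ) by ring]
  field_simp
  ring

theorem integral_sub_rpow_mul_sum_mittagLefflerTerm (hβ : 0 < β) (B : ℝ) (hu : 0 ≤ u)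
    (c M : ℝ) (n : ℕ) :
    B * ∫ s in (0:ℝ)..u, (u - s) ^ (β - 1) *
        (c * ∑ k ∈ Finset.range n, mittagLefflerTerm β (B * Gamma β) k s +
          M * mittagLefflerTerm β (B * Gamma β) n s) =
      c * ∑ k ∈ Finset.range n, mittagLefflerTerm β (B * Gamma β) (k + 1) u +
        M * mittagLefflerTerm β (B * Gamma β) (n + 1) u := by
  have hint : ∀ k, IntervalIntegrable
      (fun s => (u - s) ^ (β - 1) * mittagLefflerTerm β (B * Gamma β) k s) volume 0 u :=
    fun k => intervalIntegrable_sub_rpow_mul hβ hu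
      (continuous_mittagLefflerTerm hβ.le k).continuousOn
  have hint_sum := IntervalIntegrable.sum (Finset.range n) fun k _ => (hint k).const_mul c
  rw [Finset.sum_fn] at hint_sum
  simp_rw [mul_add, Finset.mul_sum, mul_left_comm _ c, mul_left_comm _ M]
  rw [intervalIntegral.integral_add hint_sum ((hint n).const_mul M),
    intervalIntegral.integral_finsetSum fun k _ => (hint k).const_mul c]
  simp_rw [intervalIntegral.integral_const_mul, mul_add, Finset.mul_sum, mul_left_comm B,
    integral_sub_rpow_mul_mittagLefflerTerm hβ B hu]

end MittagLefflerTerm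

theorem le_mul_sum_mittagLefflerTerm_add_mul {β B T : ℝ} {y A : ℝ → ℝ} (hβ : 0 < β)
    (hB : 0 ≤ B) (hy_cont : ContinuousOn y (Icc 0 T)) (hA_mono : MonotoneOn A (Icc 0 T))
    (h : ∀ t ∈ Icc (0:ℝ) T, y t ≤ A t + B * ∫ s in (0:ℝ)..t, (t - s) ^ (β - 1) * y s)
    {M : ℝ} (hM : ∀ t ∈ Icc (0:ℝ) T, y t ≤ M) (n : ℕ) :
    ∀ t ∈ Icc (0:ℝ) T, y t ≤ A t * ∑ k ∈ Finset.range n, mittagLefflerTerm β (B * Gamma β) k t +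
      M * mittagLefflerTerm β (B * Gamma β) n t := by
  induction n with
  | zero => simpa using hM
  | succ n ih =>
    intro t ht
    set a := mittagLefflerTerm β (B * Gamma β)
    set P := fun s => A t * ∑ k ∈ Finset.range n, a k s + M * a n s
    have hsub : Icc 0 t ⊆ Icc 0 T := Icc_subset_Icc_right ht.2
    have hyP : ∀ s ∈ Icc 0 t, y s ≤ P s := fun s hs =>
      (ih s (hsub hs)).trans <| add_le_add_left (mul_le_mul_of_nonneg_right
        (hA_mono (hsub hs) ht hs.2) (Finset.sum_nonneg fun k _ =>
          mittagLefflerTerm_nonneg hβ.le (mul_nonneg hB (Gamma_pos_of_pos hβ).le) hs.1 k)) _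
    have hP : Continuous P := by
      have := continuous_mittagLefflerTerm (C := B * Gamma β) hβ.le
      fun_prop
    calc y t ≤ A t + B * ∫ s in (0:ℝ)..t, (t - s) ^ (β - 1) * y s := h t ht
      _ ≤ A t + B * ∫ s in (0:ℝ)..t, (t - s) ^ (β - 1) * P s := by
        gcongr A t + B * ?_
        exact integral_sub_rpow_mul_mono hβ ht.1 (hy_cont.mono hsub) hP.continuousOn hyP
      _ = A t * ∑ k ∈ Finset.range (n + 1), a k t + M * a (n + 1) t := by
        rw [integral_sub_rpow_mul_sum_mittagLefflerTerm hβ B ht.1, Finset.sum_range_succ']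
        simp only [a, mittagLefflerTerm_zero]
        ring

theorem fractional_gronwall_general (β B T : ℝ) (hβ : 0 < β) (hB : 0 < B)
    (y A : ℝ → ℝ)
    (hy_cont : ContinuousOn y (Set.Icc 0 T))
    (hA_mono : MonotoneOn A (Set.Icc 0 T))
    (h : ∀ t ∈ Set.Icc (0:ℝ) T,
      y t ≤ A t + B * ∫ s in (0:ℝ)..t, (t - s) ^ (β - 1) * y s) :
    ∀ t ∈ Set.Icc (0:ℝ) T,
      y t ≤ A t * mittagLeffler β 1 (B * Real.Gamma β * t ^ β) := by
  intro t ht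
  obtain ⟨M, hM⟩ := isCompact_Icc.bddAbove_image hy_cont
  have hsum := hasSum_mittagLefflerTerm (C := B * Gamma β) hβ ht.1
  have hlim := (hsum.tendsto_sum_nat.const_mul (A t)).add
    (hsum.summable.tendsto_atTop_zero.const_mul M)
  rw [mul_zero, add_zero] at hlim
  exact ge_of_tendsto' hlim fun n => le_mul_sum_mittagLefflerTerm_add_mul hβ hB.le hy_cont
    hA_mono h (fun s hs => hM (mem_image_of_mem y hs)) n t ht

/-- The fractional Gronwall–Bellman inequality: if `y ≥ 0` is continuous on
`[0,T]`, `A ≥ 0` is nondecreasing on `[0,T]`, `B > 0`, `β > 0`, and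
`y(t) ≤ A(t) + B ∫₀ᵗ (t−s)^{β−1} y(s) ds` on `[0,T]`, then
`y(t) ≤ A(t) E_β(B Γ(β) t^β)` on `[0,T]`. -/
theorem fractional_gronwall (β B T : ℝ) (hβ : 0 < β) (hB : 0 < B)
    (y A : ℝ → ℝ)
    (hy_cont : ContinuousOn y (Set.Icc 0 T))
    (hy_nonneg : ∀ t ∈ Set.Icc (0:ℝ) T, 0 ≤ y t)
    (hA_nonneg : ∀ t ∈ Set.Icc (0:ℝ) T, 0 ≤ A t)
    (hA_mono : MonotoneOn A (Set.Icc 0 T))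
    (h : ∀ t ∈ Set.Icc (0:ℝ) T,
      y t ≤ A t + B * ∫ s in (0:ℝ)..t, (t - s) ^ (β - 1) * y s) :
    ∀ t ∈ Set.Icc (0:ℝ) T,
      y t ≤ A t * mittagLeffler β 1 (B * Real.Gamma β * t ^ β) :=
  fractional_gronwall_general β B T hβ hB y A hy_cont hA_mono h
end
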